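/- Let A and B be skew-symmetric bilinear forms on a finite-dimensional vector space V over an infinite field, and define the core subspace K as the sum of the radicals Ker(A + λB) over all regular values λ (those λ for which rk(A + λB) is maximal among all members of the pencil). Then K is isotropic with respect to every form A + λB in the pencil. -/
import Mathlib


open Module

variable {K V : Type*} [Field K] [AddCommGroup V] [Module K V]

/-- The rank of a bilinear form. -/
noncomputable def formRank (C : V →ₗ[K] V →ₗ[K] K) : ℕ :=
  finrank K (LinearMap.range C)

/-- `λ` is a regular value of the pencil `{A + λB}` if the rank of `A + λB` is
maximal among all members of the pencil. -/
def IsRegularValue (A B : V →ₗ[K] V →ₗ[K] K) (lam : K) : Prop :=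
  ∀ mu : K, formRank (A + mu • B) ≤ formRank (A + lam • B)

/-- The core subspace: the sum of the radicals `Ker (A + λB)` over all regular
values `λ`. -/
noncomputable def coreSubspace (A B : V →ₗ[K] V →ₗ[K] K) : Submodule K V :=
  ⨆ (lam : K) (_ : IsRegularValue A B lam), LinearMap.ker (A + lam • B)

lemma card_le_formRank {K V : Type*} [Field K] [AddCommGroup V] [Module K V]
    [FiniteDimensional K V] {ι : Type*} [Fintype ι] [DecidableEq ι]
    (D : V →ₗ[K] V →ₗ[K] K) (hD : ∀ x y, D x y = - D y x) (u : ι → V)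
    (hdet : (Matrix.of fun i j => D (u i) (u j)).det ≠ 0) :
    Fintype.card ι ≤ formRank D := by
  classical
  set G : Matrix ι ι K := Matrix.of fun i j => D (u i) (u j) with hG
  have hunit : IsUnit G.det := hdet.isUnit
  let π : (V →ₗ[K] K) →ₗ[K] (ι → K) := LinearMap.pi fun i => LinearMap.applyₗ (u i)
  let F : V →ₗ[K] (ι → K) := π.comp D.flip
  have hFsurj : Function.Surjective F := by
    intro y
    refine ⟨∑ j, (G⁻¹.mulVec y) j • u j, ?_⟩
    have hF : ∀ x i, F x i = D (u i) x := fun x i => rfl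
    funext i
    rw [hF]
    rw [map_sum]
    have : ∀ j, (D (u i)) ((G⁻¹.mulVec y) j • u j) = G i j * (G⁻¹.mulVec y) j := by
      intro j
      rw [map_smul, smul_eq_mul, mul_comm]
      rfl
    rw [Finset.sum_congr rfl fun j _ => this j]
    have : ∑ j, G i j * (G⁻¹.mulVec y) j = (G.mulVec (G⁻¹.mulVec y)) i := rfl
    rw [this, Matrix.mulVec_mulVec, Matrix.mul_nonsing_inv G hunit, Matrix.one_mulVec]
  have h1 : Fintype.card ι = finrank K (LinearMap.range F) := by
    rw [LinearMap.range_eq_top.mpr hFsurj, finrank_top, Module.finrank_fintype_fun_eq_card]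
  have h2 : (LinearMap.range F) = (LinearMap.range D.flip).map π := by
    rw [← LinearMap.range_comp]
  have h3 : D.flip = -D := by
    ext x y
    simp [hD x y]
  rw [h1, h2, h3, LinearMap.range_neg]
  exact (Submodule.finrank_map_le π _)

lemma exists_gram {K V : Type*} [Field K] [AddCommGroup V] [Module K V]
    [FiniteDimensional K V]
    (D : V →ₗ[K] V →ₗ[K] K) (hD : ∀ x y, D x y = - D y x) :
    ∃ w : Fin (formRank D) → V, (Matrix.of fun i j => D (w i) (w j)).det ≠ 0 := by
  classical
  obtain ⟨q, hq⟩ := (LinearMap.ker D).exists_isCompl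
  have hd : finrank K q = formRank D := by
    have h1 := LinearMap.finrank_range_add_finrank_ker D
    have h2 := Submodule.finrank_add_eq_of_isCompl hq
    unfold formRank
    omega
  let b : Basis (Fin (formRank D)) K q := (Module.finBasis K q).reindex (finCongr hd)
  refine ⟨fun i => (b i : V), ?_⟩
  intro hdet0
  obtain ⟨c, hc0, hmc⟩ := Matrix.exists_mulVec_eq_zero_iff.mpr hdet0
  set x : q := ∑ j, c j • b j with hx
  have hxv : (x : V) = ∑ j, c j • (b j : V) := by
    simp [hx]
  have hbx : ∀ i, D (b i : V) (x : V) = 0 := by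
    intro i
    have := congrFun hmc i
    simp only [Matrix.mulVec, dotProduct, Matrix.of_apply, Pi.zero_apply] at this
    rw [hxv, map_sum]
    rw [← this]
    exact Finset.sum_congr rfl fun j _ => by rw [map_smul, smul_eq_mul, mul_comm]
  -- all of q pairs to zero with x
  have hqx : ∀ z ∈ q, D z (x : V) = 0 := by
    intro z hz
    have : ((D.flip (x : V)).comp q.subtype) = 0 := by
      apply Module.Basis.ext b
      intro i
      simpa using hbx i
    have := congrArg (fun f => f ⟨z, hz⟩) this
    simpa using this
  have hker : (x : V) ∈ LinearMap.ker D := by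
    rw [LinearMap.mem_ker]
    ext y
    have hy : y ∈ LinearMap.ker D ⊔ q := by rw [hq.sup_eq_top]; trivial
    obtain ⟨a, ha, z, hz, rfl⟩ := Submodule.mem_sup.mp hy
    have h1 : D (x : V) a = 0 := by
      rw [hD]
      rw [LinearMap.mem_ker] at ha
      simp [ha]
    have h2 : D (x : V) z = 0 := by
      rw [hD, hqx z hz, neg_zero]
    simp [map_add, h1, h2]
  have hx0 : x = 0 := by
    have : (x : V) ∈ LinearMap.ker D ⊓ q := ⟨hker, x.2⟩
    rw [hq.inf_eq_bot] at this
    exact Subtype.ext (by simpa using this)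
  have := Fintype.linearIndependent_iff.mp b.linearIndependent c (by rw [← hx]; exact_mod_cast hx0)
  exact hc0 (funext this)

lemma no_extension {K V : Type*} [Field K] [Infinite K] [AddCommGroup V] [Module K V]
    [FiniteDimensional K V]
    (D B : V →ₗ[K] V →ₗ[K] K) (hD : ∀ x y, D x y = - D y x) (hB : ∀ x y, B x y = - B y x)
    (hreg : ∀ t : K, formRank (D + t • B) ≤ formRank D)
    {κ : Type*} [Fintype κ] [DecidableEq κ] [Nonempty κ]
    (z : κ → V) (hz : ∀ i, z i ∈ LinearMap.ker D)
    (hdetB : (Matrix.of fun i j => B (z i) (z j)).det ≠ 0) : False := by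
  classical
  obtain ⟨w, hw⟩ := exists_gram D hD
  set u' : (Fin (formRank D) ⊕ κ) → V := Sum.elim w z with hu'
  set P : Matrix (Fin (formRank D) ⊕ κ) (Fin (formRank D) ⊕ κ) (Polynomial K) :=
    Matrix.of fun i j => Polynomial.C (D (u' i) (u' j)) + Polynomial.X * Polynomial.C (B (u' i) (u' j)) with hP
  set N : Matrix (Fin (formRank D) ⊕ κ) (Fin (formRank D) ⊕ κ) (Polynomial K) :=
    Matrix.of fun i j =>
      Sum.elim (fun i' => P (Sum.inl i') j) (fun _ => Polynomial.C (B (u' i) (u' j))) i with hN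
  have hDz : ∀ (i : κ) j, D (u' (Sum.inr i)) (u' j) = 0 := by
    intro i j
    have : D (z i) = 0 := LinearMap.mem_ker.mp (hz i)
    simp [hu', this]
  have hDz' : ∀ (i : κ) j, D (u' j) (u' (Sum.inr i)) = 0 := by
    intro i j
    rw [hD, hDz, neg_zero]
  set g : (Fin (formRank D) ⊕ κ) → Polynomial K :=
    Sum.elim (fun _ => 1) (fun _ => Polynomial.X) with hg
  have hPN : P = Matrix.of fun i j => g i * N i j := by
    ext i j
    cases i with
    | inl i => simp [hP, hN, hg]
    | inr i => simp [hP, hN, hg, hDz i j]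
  have hdetP : P.det = Polynomial.X ^ (Fintype.card κ) * N.det := by
    rw [hPN, Matrix.det_mul_column]
    congr 1
    rw [hg, Fintype.prod_sum_type]
    simp
  have hmap0 : N.map (Polynomial.eval 0) = Matrix.fromBlocks
      (Matrix.of fun i j => D (w i) (w j)) 0
      (Matrix.of fun i j => B (z i) (w j)) (Matrix.of fun i j => B (z i) (z j)) := by
    ext i j
    cases i with
    | inl i =>
      cases j with
      | inl j => simp [hN, hP, hu']
      | inr j =>
        have := hDz' j (Sum.inl i)
        simp [hN, hP, hu'] at this ⊢
        simp [this]
    | inr i =>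
      cases j with
      | inl j => simp [hN, hu']
      | inr j => simp [hN, hu']
  have hN0 : Polynomial.eval 0 N.det ≠ 0 := by
    have : Polynomial.eval 0 N.det = ((Polynomial.evalRingHom 0) : Polynomial K →+* K) N.det := rfl
    rw [this, RingHom.map_det, RingHom.mapMatrix_apply]
    have : N.map ⇑(Polynomial.evalRingHom 0) = N.map (Polynomial.eval 0) := rfl
    rw [this, hmap0, Matrix.det_fromBlocks_zero₁₂]
    exact mul_ne_zero hw hdetB
  have hNne : N.det ≠ 0 := fun h => hN0 (by rw [h]; simp)
  have hPne : P.det ≠ 0 := by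
    rw [hdetP]
    exact mul_ne_zero (pow_ne_zero _ Polynomial.X_ne_zero) hNne
  obtain ⟨t, ht⟩ : ∃ t, Polynomial.eval t P.det ≠ 0 := by
    by_contra h
    push_neg at h
    exact hPne (Polynomial.zero_of_eval_zero _ h)
  have hmapt : P.map (Polynomial.eval t) = Matrix.of fun i j => (D + t • B) (u' i) (u' j) := by
    ext i j
    simp [hP, LinearMap.add_apply, LinearMap.smul_apply, smul_eq_mul]
    ring
  have hdet_t : (Matrix.of fun i j => (D + t • B) (u' i) (u' j)).det ≠ 0 := by
    rw [← hmapt]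
    have : P.map (Polynomial.eval t) = P.map ⇑(Polynomial.evalRingHom t) := rfl
    rw [this, ← RingHom.mapMatrix_apply, ← RingHom.map_det]
    exact ht
  have hskew : ∀ x y, (D + t • B) x y = - (D + t • B) y x := by
    intro x y
    simp [hD x y, hB x y]
    ring
  have hle := card_le_formRank (D + t • B) hskew u' hdet_t
  have hle2 := hreg t
  have hcard : Fintype.card (Fin (formRank D) ⊕ κ) = formRank D + Fintype.card κ := by simp
  have hpos : 0 < Fintype.card κ := Fintype.card_pos
  omega


lemma ker_B_isotropic {K V : Type*} [Field K] [Infinite K] [AddCommGroup V] [Module K V]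
    [FiniteDimensional K V]
    (A B : V →ₗ[K] V →ₗ[K] K)
    (hA : ∀ u v, A u v = - A v u) (hB : ∀ u v, B u v = - B v u) {lam : K}
    (hreg : IsRegularValue A B lam)
    {u v : V} (hu : u ∈ LinearMap.ker (A + lam • B)) (hv : v ∈ LinearMap.ker (A + lam • B)) :
    B u v = 0 := by
  by_contra hb
  set D := A + lam • B with hDdef
  have hDskew : ∀ x y, D x y = - D y x := by
    intro x y
    simp [hDdef, LinearMap.add_apply, LinearMap.smul_apply, smul_eq_mul, hA x y, hB x y]
    ring
  have hreg' : ∀ t : K, formRank (D + t • B) ≤ formRank D := by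
    intro t
    have h := hreg (lam + t)
    have : A + (lam + t) • B = D + t • B := by
      rw [hDdef, add_smul]
      abel
    rwa [this] at h
  by_cases h2 : (Matrix.of fun i j : Fin 2 => B (![u, v] i) (![u, v] j)).det ≠ 0
  · exact no_extension D B hDskew hB hreg' ![u, v]
      (by intro i; fin_cases i <;> simpa) h2
  · push_neg at h2
    rw [Matrix.det_fin_two] at h2
    simp only [Matrix.of_apply] at h2
    have hvu : B v u = - B u v := by rw [hB]
    have hBuu : B u u ≠ 0 := by
      intro h0
      simp only [Matrix.cons_val_zero, Matrix.cons_val_one, Matrix.head_cons, h0, zero_mul,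
        hvu, zero_sub, mul_neg, neg_eq_zero, mul_self_eq_zero] at h2
      exact hb h2
    refine no_extension D B hDskew hB hreg' (fun _ : Fin 1 => u) (fun _ => hu) ?_
    rw [Matrix.det_fin_one]
    exact hBuu

lemma pair_isotropic {K V : Type*} [Field K] [Infinite K] [AddCommGroup V] [Module K V]
    [FiniteDimensional K V]
    (A B : V →ₗ[K] V →ₗ[K] K)
    (hA : ∀ u v, A u v = - A v u) (hB : ∀ u v, B u v = - B v u) {l1 l2 : K}
    (h1 : IsRegularValue A B l1) (h2 : IsRegularValue A B l2)
    {u v : V} (hu : u ∈ LinearMap.ker (A + l1 • B)) (hv : v ∈ LinearMap.ker (A + l2 • B)) :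
    A u v = 0 ∧ B u v = 0 := by
  have happ : ∀ (l : K) (x y : V), (A + l • B) x y = A x y + l * B x y := by
    intro l x y
    simp [LinearMap.add_apply, LinearMap.smul_apply, smul_eq_mul]
  have hu' : A u v + l1 * B u v = 0 := by
    have : (A + l1 • B) u = 0 := LinearMap.mem_ker.mp hu
    rw [← happ]
    rw [this]
    rfl
  by_cases heq : l1 = l2
  · subst heq
    have hBuv : B u v = 0 := ker_B_isotropic A B hA hB h1 hu hv
    refine ⟨?_, hBuv⟩
    rw [hBuv, mul_zero, add_zero] at hu'
    exact hu'
  · have hv' : A v u + l2 * B v u = 0 := by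
      have : (A + l2 • B) v = 0 := LinearMap.mem_ker.mp hv
      rw [← happ]
      rw [this]
      rfl
    rw [hA v u, hB v u] at hv'
    have hv'' : A u v + l2 * B u v = 0 := by linear_combination -hv'
    have hBuv : B u v = 0 := by
      have hd : (l1 - l2) * B u v = 0 := by linear_combination hu' - hv''
      rcases mul_eq_zero.mp hd with h | h
      · exact absurd (sub_eq_zero.mp h) heq
      · exact h
    refine ⟨?_, hBuv⟩
    rw [hBuv, mul_zero, add_zero] at hu'
    exact hu'

/-- For skew-symmetric bilinear forms `A, B` on a finite-dimensional
vector space over an infinite field, the core subspace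
`K = Σ_{λ regular} Ker(A + λB)` is isotropic with respect to every form `A + λB`
of the pencil. -/
theorem coreSubspace_isotropic
    {K V : Type*} [Field K] [Infinite K]
    [AddCommGroup V] [Module K V] [FiniteDimensional K V]
    (A B : V →ₗ[K] V →ₗ[K] K)
    (hA : ∀ u v, A u v = - A v u) (hB : ∀ u v, B u v = - B v u) :
    ∀ (lam : K), ∀ u ∈ coreSubspace A B, ∀ v ∈ coreSubspace A B,
      (A + lam • B) u v = 0 := by
  intro lam u hu v hv
  have key : A u v = 0 ∧ B u v = 0 := by
    -- first: for fixed v in a regular kernel, all of core pairs to zero with v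
    have step : ∀ (l2 : K), IsRegularValue A B l2 → ∀ x ∈ coreSubspace A B,
        ∀ y ∈ LinearMap.ker (A + l2 • B), A x y = 0 ∧ B x y = 0 := by
      intro l2 hl2 x hx y hy
      have hle : coreSubspace A B ≤ LinearMap.ker ((A.flip) y) ⊓ LinearMap.ker ((B.flip) y) := by
        apply iSup_le
        intro l1
        apply iSup_le
        intro hl1
        intro z hz
        obtain ⟨h1, h2⟩ := pair_isotropic A B hA hB hl1 hl2 hz hy
        exact ⟨by simpa [LinearMap.flip_apply] using h1, by simpa [LinearMap.flip_apply] using h2⟩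
      obtain ⟨h1, h2⟩ := hle hx
      exact ⟨by simpa [LinearMap.flip_apply] using h1, by simpa [LinearMap.flip_apply] using h2⟩
    have hle2 : coreSubspace A B ≤ LinearMap.ker (A u) ⊓ LinearMap.ker (B u) := by
      apply iSup_le
      intro l2
      apply iSup_le
      intro hl2
      intro y hy
      obtain ⟨h1, h2⟩ := step l2 hl2 u hu y hy
      exact ⟨h1, h2⟩
    obtain ⟨h1, h2⟩ := hle2 hv
    exact ⟨h1, h2⟩
  obtain ⟨h1, h2⟩ := key
  simp [LinearMap.add_apply, LinearMap.smul_apply, smul_eq_mul, h1, h2]
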